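/- Let m ≥ r ≥ r_A ≥ 1 be integers, let U ∈ St(m, r_A), and let Z ∈ ℝ^{m×r} have full column rank (so ZᵀZ is positive definite). Set X = Z(ZᵀZ)^{−1/2}, where (ZᵀZ)^{−1/2} is the inverse of the positive definite square root of ZᵀZ. Then X ∈ St(m,r) and σ_{r_A}(UᵀX) ≥ σ_{r_A}(UᵀZ)/σ_1(Z). -/

import Mathlib

open Matrix MeasureTheory ProbabilityTheory BigOperators

noncomputable section

/-- Frobenius norm of a real matrix. -/
def frob {m n : ℕ} (M : Matrix (Fin m) (Fin n) ℝ) : ℝ :=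
  Real.sqrt (∑ i, ∑ j, (M i j) ^ 2)

/-- Euclidean norm of a vector in `ℝⁿ`. -/
def vnorm {n : ℕ} (v : Fin n → ℝ) : ℝ :=
  Real.sqrt (∑ i, (v i) ^ 2)

/-- Spectral norm (operator 2-norm) of a real matrix. -/
def spec {m n : ℕ} (M : Matrix (Fin m) (Fin n) ℝ) : ℝ :=
  ‖LinearMap.toContinuousLinearMap (Matrix.toEuclideanLin M)‖

theorem isHermitian_tmul {m n : ℕ} (M : Matrix (Fin m) (Fin n) ℝ) :
    (Mᵀ * M).IsHermitian := by
  simpa [Matrix.conjTranspose_eq_transpose_of_trivial] using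
    Matrix.isHermitian_conjTranspose_mul_self M

theorem posSemidef_tmul {m n : ℕ} (M : Matrix (Fin m) (Fin n) ℝ) :
    (Mᵀ * M).PosSemidef := by
  simpa [Matrix.conjTranspose_eq_transpose_of_trivial] using
    Matrix.posSemidef_conjTranspose_mul_self M

/-- The `i`-th largest singular value (1-indexed) of a real matrix, i.e. the square root of the
`i`-th largest eigenvalue of `MᵀM`; junk value `0` when `i` is out of range. -/
def svalue {m n : ℕ} (M : Matrix (Fin m) (Fin n) ℝ) (i : ℕ) : ℝ :=
  if h : 1 ≤ i ∧ i ≤ n then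
    Real.sqrt ((isHermitian_tmul M).eigenvalues
      (Tuple.sort (isHermitian_tmul M).eigenvalues ⟨n - i, by omega⟩))
  else 0

/-- Membership in the Stiefel manifold `St(m,r)`. -/
def Stiefel {m r : ℕ} (X : Matrix (Fin m) (Fin r) ℝ) : Prop :=
  Xᵀ * X = 1

/-- The Loewner order on (symmetric) real matrices: `A ⪯ B`. -/
def loewnerLE {m : ℕ} (A B : Matrix (Fin m) (Fin m) ℝ) : Prop :=
  (B - A).PosSemidef

/-- The inverse of the positive semidefinite square root of a matrix (junk value `0` when the
matrix is not positive semidefinite). -/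
def sqrtInv {r : ℕ} (S : Matrix (Fin r) (Fin r) ℝ) : Matrix (Fin r) (Fin r) ℝ :=
  haveI := Classical.propDecidable S.PosSemidef
  if h : S.PosSemidef then
    (h.1.eigenvectorUnitary.1 * diagonal ((↑) ∘ (√·) ∘ h.1.eigenvalues) *
      (star h.1.eigenvectorUnitary : Matrix (Fin r) (Fin r) ℝ))⁻¹ else 0

/-- The linear sensing map `𝓜` determined by feature matrices `M_i`:
`𝓜(B)_i = Tr(M_iᵀ B)`. -/
def calM {m n : ℕ} (Ms : Fin n → Matrix (Fin m) (Fin m) ℝ)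
    (B : Matrix (Fin m) (Fin m) ℝ) : Fin n → ℝ :=
  fun i => ((Ms i)ᵀ * B).trace

/-- The adjoint `𝓜*` of the sensing map: `𝓜*(y) = ∑ i, y_i M_i`. -/
def calMadj {m n : ℕ} (Ms : Fin n → Matrix (Fin m) (Fin m) ℝ)
    (y : Fin n → ℝ) : Matrix (Fin m) (Fin m) ℝ :=
  ∑ i, y i • Ms i

/-- `(𝓜*𝓜 − 𝓘)(B)`. -/
def calE {m n : ℕ} (Ms : Fin n → Matrix (Fin m) (Fin m) ℝ)
    (B : Matrix (Fin m) (Fin m) ℝ) : Matrix (Fin m) (Fin m) ℝ :=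
  calMadj Ms (calM Ms B) - B

/-- The `(s, δ)`-restricted isometry property for the sensing map determined by `Ms`. -/
def IsRIP {m n : ℕ} (Ms : Fin n → Matrix (Fin m) (Fin m) ℝ) (s : ℕ) (δ : ℝ) : Prop :=
  ∀ B : Matrix (Fin m) (Fin m) ℝ, B.IsSymm → B.rank ≤ s →
    (1 - δ) * frob B ^ 2 ≤ vnorm (calM Ms B) ^ 2 ∧
      vnorm (calM Ms B) ^ 2 ≤ (1 + δ) * frob B ^ 2

/-- The Riemannian gradient on the Stiefel manifold obtained from the Euclidean gradient `g`
at the point `X`. -/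
def Rgrad {m r : ℕ} (X g : Matrix (Fin m) (Fin r) ℝ) : Matrix (Fin m) (Fin r) ℝ :=
  (1 - X * Xᵀ) * g + (2⁻¹ : ℝ) • (X * (Xᵀ * g - gᵀ * X))

/-- One step of Riemannian gradient descent (with `μ = 2`) for the weight-normalized
matrix sensing problem. -/
def RGDstep {m r n : ℕ} (Ms : Fin n → Matrix (Fin m) (Fin m) ℝ)
    (A : Matrix (Fin m) (Fin m) ℝ) (η : ℝ)
    (p : Matrix (Fin m) (Fin r) ℝ × Matrix (Fin r) (Fin r) ℝ) :
    Matrix (Fin m) (Fin r) ℝ × Matrix (Fin r) (Fin r) ℝ :=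
  let X := p.1
  let Θ := p.2
  let Gt := calMadj Ms (calM Ms (X * Θ * Xᵀ - A)) * X * Θ
  let G := Rgrad X Gt
  let X' := (X - η • G) * sqrtInv (1 + η ^ 2 • (Gᵀ * G))
  let Θ' := X'ᵀ * A * X' - X'ᵀ * calE Ms (X' * Θ * X'ᵀ - A) * X'
  (X', Θ')

/-- The standard Gaussian ensemble on `m × r` real matrices (i.i.d. `N(0,1)` entries). -/
def gaussianEnsemble (m r : ℕ) : Measure (Fin m → Fin r → ℝ) :=
  Measure.pi fun _ : Fin m => Measure.pi fun _ : Fin r => gaussianReal 0 1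

end


/-!
`X = Z N` with `N = (ZᵀZ)^{-1/2}` has orthonormal columns because `N (ZᵀZ) N = 1`.
For the singular values we use the Courant–Fischer characterisation: `σ_k(B) ≥ c` iff `B`
stretches every vector of some `k`-dimensional subspace by at least `c`. Since
`‖x‖ = ‖Z (N x)‖ ≤ σ₁(Z) ‖N x‖`, the preimage under `N` of such a subspace for `B = UᵀZ`
is one on which `UᵀZ N` stretches by at least `σ_k(UᵀZ) / σ₁(Z)`.
-/

section Orthonormal

variable {E ι : Type*} [NormedAddCommGroup E] [InnerProductSpace ℝ E] [Fintype ι]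
  {w : ι → E} {T : E →ₗ[ℝ] E} {μ : ι → ℝ} {x : E}

theorem Orthonormal.exists_norm_sq_inner_apply_self_of_mem_span (hw : Orthonormal ℝ w)
    (hT : ∀ i, T (w i) = μ i • w i) (hx : x ∈ Submodule.span ℝ (Set.range w)) :
    ∃ c : ι → ℝ, ‖x‖ ^ 2 = ∑ i, c i ^ 2 ∧ inner ℝ x (T x) = ∑ i, μ i * c i ^ 2 := by
  obtain ⟨c, rfl⟩ := (Submodule.mem_span_range_iff_exists_fun ℝ).mp hx
  refine ⟨c, ?_, ?_⟩
  · rw [← real_inner_self_eq_norm_sq, hw.inner_sum]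
    simp [sq]
  · simp only [map_sum, map_smul, hT, smul_smul]
    rw [hw.inner_sum]
    exact Finset.sum_congr rfl fun i _ => by simp; ring

theorem Orthonormal.mul_norm_sq_le_inner_apply_self (hw : Orthonormal ℝ w)
    (hT : ∀ i, T (w i) = μ i • w i) {t : ℝ} (ht : ∀ i, t ≤ μ i)
    (hx : x ∈ Submodule.span ℝ (Set.range w)) : t * ‖x‖ ^ 2 ≤ inner ℝ x (T x) := by
  obtain ⟨c, hnorm, hinner⟩ := hw.exists_norm_sq_inner_apply_self_of_mem_span hT hx
  rw [hnorm, hinner, Finset.mul_sum]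
  gcongr with i
  exact ht i

theorem Orthonormal.inner_apply_self_le_mul_norm_sq (hw : Orthonormal ℝ w)
    (hT : ∀ i, T (w i) = μ i • w i) {t : ℝ} (ht : ∀ i, μ i ≤ t)
    (hx : x ∈ Submodule.span ℝ (Set.range w)) : inner ℝ x (T x) ≤ t * ‖x‖ ^ 2 := by
  obtain ⟨c, hnorm, hinner⟩ := hw.exists_norm_sq_inner_apply_self_of_mem_span hT hx
  rw [hnorm, hinner, Finset.mul_sum]
  gcongr with i
  exact ht i

end Orthonormal

namespace Matrix.IsHermitian

variable {n : ℕ} {A : Matrix (Fin n) (Fin n) ℝ} (hA : A.IsHermitian)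

/-- The eigenvalues in increasing order, so that `svalue B k` is the square root of entry
`n - k` of `(isHermitian_tmul B).sortedEigenvalues`. -/
noncomputable def sortedEigenvalues : Fin n → ℝ :=
  hA.eigenvalues ∘ Tuple.sort hA.eigenvalues

theorem sortedEigenvalues_monotone : Monotone hA.sortedEigenvalues :=
  Tuple.monotone_sort hA.eigenvalues

include hA

theorem toEuclideanLin_eigenvectorBasis (i : Fin n) :
    toEuclideanLin A (hA.eigenvectorBasis i) = hA.eigenvalues i • hA.eigenvectorBasis i := by
  ext j
  simp [toLpLin_apply, hA.mulVec_eigenvectorBasis]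

theorem orthonormal_eigenvectorBasis_sort (s : Finset (Fin n)) :
    Orthonormal ℝ fun j : s => hA.eigenvectorBasis (Tuple.sort hA.eigenvalues j) :=
  hA.eigenvectorBasis.orthonormal.comp _
    ((Tuple.sort hA.eigenvalues).injective.comp Subtype.val_injective)

theorem exists_finrank_eq_sortedEigenvalues_mul_le (j : Fin n) :
    ∃ V : Submodule ℝ (EuclideanSpace ℝ (Fin n)), Module.finrank ℝ V = n - j ∧
      ∀ x ∈ V, hA.sortedEigenvalues j * ‖x‖ ^ 2 ≤ inner ℝ x (toEuclideanLin A x) := by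
  have hw := hA.orthonormal_eigenvectorBasis_sort (Finset.Ici j)
  refine ⟨Submodule.span ℝ (Set.range _), ?_, fun x hx => hw.mul_norm_sq_le_inner_apply_self
    (fun i => hA.toEuclideanLin_eigenvectorBasis _) (fun i => ?_) hx⟩
  · rw [finrank_span_eq_card hw.linearIndependent, Fintype.card_coe, Fin.card_Ici]
  · exact hA.sortedEigenvalues_monotone (Finset.mem_Ici.mp i.2)

/-- A subspace of dimension `n - j` meets the span of the `j + 1` lowest eigenvectors. -/
theorem le_sortedEigenvalues_of_le_finrank (j : Fin n)
    (V : Submodule ℝ (EuclideanSpace ℝ (Fin n))) (hV : n - j ≤ Module.finrank ℝ V) {t : ℝ}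
    (ht : ∀ x ∈ V, t * ‖x‖ ^ 2 ≤ inner ℝ x (toEuclideanLin A x)) :
    t ≤ hA.sortedEigenvalues j := by
  have hw := hA.orthonormal_eigenvectorBasis_sort (Finset.Iic j)
  set W : Submodule ℝ (EuclideanSpace ℝ (Fin n)) := Submodule.span ℝ (Set.range _)
  have hW : Module.finrank ℝ W = j + 1 := by
    rw [finrank_span_eq_card hw.linearIndependent, Fintype.card_coe, Fin.card_Iic]
  obtain ⟨x, ⟨hxV, hxW⟩, hx⟩ : ∃ x ∈ V ⊓ W, x ≠ 0 := by
    refine Submodule.exists_mem_ne_zero_of_ne_bot fun hbot => ?_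
    have hsup := (V ⊔ W).finrank_le
    have hdim := Submodule.finrank_sup_add_finrank_inf_eq V W
    rw [finrank_euclideanSpace_fin] at hsup
    rw [hbot, finrank_bot] at hdim
    omega
  have hle := hw.inner_apply_self_le_mul_norm_sq (fun i => hA.toEuclideanLin_eigenvectorBasis _)
    (fun i => hA.sortedEigenvalues_monotone (Finset.mem_Iic.mp i.2)) hxW
  have hx : 0 < ‖x‖ ^ 2 := by positivity
  exact le_of_mul_le_mul_right ((ht x hxV).trans hle) hx

end Matrix.IsHermitian

section SingularValues

variable {m n : ℕ}

theorem inner_toEuclideanLin_transpose_mul_self (B : Matrix (Fin m) (Fin n) ℝ)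
    (x : EuclideanSpace ℝ (Fin n)) :
    inner ℝ x (toEuclideanLin (Bᵀ * B) x) = ‖toEuclideanLin B x‖ ^ 2 := by
  rw [← conjTranspose_eq_transpose_of_trivial, toLpLin_mul_same,
    toEuclideanLin_conjTranspose_eq_adjoint, LinearMap.comp_apply, LinearMap.adjoint_inner_right,
    real_inner_self_eq_norm_sq]

theorem svalue_nonneg (B : Matrix (Fin m) (Fin n) ℝ) (k : ℕ) : 0 ≤ svalue B k := by
  unfold svalue
  split_ifs <;> positivity

theorem svalue_eq_sqrt {B : Matrix (Fin m) (Fin n) ℝ} {k : ℕ} (hk : 1 ≤ k) (hkn : k ≤ n) :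
    svalue B k = √((isHermitian_tmul B).sortedEigenvalues ⟨n - k, by omega⟩) :=
  dif_pos ⟨hk, hkn⟩

theorem exists_finrank_eq_svalue_mul_norm_le (B : Matrix (Fin m) (Fin n) ℝ) {k : ℕ}
    (hk : 1 ≤ k) (hkn : k ≤ n) :
    ∃ V : Submodule ℝ (EuclideanSpace ℝ (Fin n)), Module.finrank ℝ V = k ∧
      ∀ x ∈ V, svalue B k * ‖x‖ ≤ ‖toEuclideanLin B x‖ := by
  obtain ⟨V, hV, hB⟩ :=
    (isHermitian_tmul B).exists_finrank_eq_sortedEigenvalues_mul_le ⟨n - k, by omega⟩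
  refine ⟨V, by simp only [hV]; omega, fun x hx => ?_⟩
  have h := hB x hx
  rw [inner_toEuclideanLin_transpose_mul_self] at h
  have hev : 0 ≤ (isHermitian_tmul B).sortedEigenvalues ⟨n - k, by omega⟩ :=
    (posSemidef_tmul B).eigenvalues_nonneg _
  rw [svalue_eq_sqrt hk hkn, ← Real.sqrt_sq (norm_nonneg x), ← Real.sqrt_mul hev,
    ← Real.sqrt_sq (norm_nonneg (toEuclideanLin B x))]
  exact Real.sqrt_le_sqrt h

theorem le_svalue_of_le_finrank (B : Matrix (Fin m) (Fin n) ℝ) {k : ℕ} (hk : 1 ≤ k)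
    (hkn : k ≤ n) (V : Submodule ℝ (EuclideanSpace ℝ (Fin n))) (hV : k ≤ Module.finrank ℝ V)
    {c : ℝ} (hc : 0 ≤ c) (hB : ∀ x ∈ V, c * ‖x‖ ≤ ‖toEuclideanLin B x‖) :
    c ≤ svalue B k := by
  rw [svalue_eq_sqrt hk hkn]
  refine Real.le_sqrt_of_sq_le <| (isHermitian_tmul B).le_sortedEigenvalues_of_le_finrank _ V
    (by simp only; omega) fun x hx => ?_
  rw [inner_toEuclideanLin_transpose_mul_self, ← mul_pow]
  gcongr
  exact hB x hx

theorem norm_toEuclideanLin_le_svalue_one_mul (B : Matrix (Fin m) (Fin n) ℝ)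
    (x : EuclideanSpace ℝ (Fin n)) : ‖toEuclideanLin B x‖ ≤ svalue B 1 * ‖x‖ := by
  rcases eq_or_ne x 0 with rfl | hx
  · simp
  have hn : 1 ≤ n := by
    by_contra! hn
    obtain rfl : n = 0 := by omega
    exact hx (Subsingleton.elim _ _)
  have hx' : 0 < ‖x‖ := norm_pos_iff.mpr hx
  rw [← div_le_iff₀ hx']
  refine le_svalue_of_le_finrank B le_rfl hn (ℝ ∙ x) (finrank_span_singleton hx).ge
    (by positivity) fun y hy => ?_
  obtain ⟨a, rfl⟩ := Submodule.mem_span_singleton.mp hy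
  refine le_of_eq ?_
  rw [map_smul, norm_smul, norm_smul]
  field_simp

theorem svalue_le_mul_svalue_mul (B : Matrix (Fin m) (Fin n) ℝ) (M : Matrix (Fin n) (Fin n) ℝ)
    {c : ℝ} (hM : ∀ x, ‖x‖ ≤ c * ‖toEuclideanLin M x‖) (k : ℕ) :
    svalue B k ≤ c * svalue (B * M) k := by
  by_cases hk : 1 ≤ k ∧ k ≤ n
  swap
  · simp [svalue, dif_neg hk]
  obtain ⟨hk, hkn⟩ := hk
  have hc : 0 < c := by
    have : Nontrivial (EuclideanSpace ℝ (Fin n)) :=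
      Module.nontrivial_of_finrank_pos (by rw [finrank_euclideanSpace_fin]; omega)
    obtain ⟨x, hx⟩ := exists_ne (0 : EuclideanSpace ℝ (Fin n))
    exact pos_of_mul_pos_left ((norm_pos_iff.mpr hx).trans_le (hM x)) (norm_nonneg _)
  have hinj : Function.Injective (toEuclideanLin M) :=
    (injective_iff_map_eq_zero _).mpr fun x hx => by simpa [hx] using hM x
  let e := LinearEquiv.ofInjectiveEndo _ hinj
  obtain ⟨V, hV, hB⟩ := exists_finrank_eq_svalue_mul_norm_le B hk hkn
  have hσc : 0 ≤ svalue B k / c := div_nonneg (svalue_nonneg B k) hc.le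
  rw [← div_le_iff₀' hc]
  refine le_svalue_of_le_finrank _ hk hkn (V.comap e.toLinearMap)
    (by rw [Submodule.comap_equiv_eq_map_symm, LinearEquiv.finrank_map_eq, hV]) hσc
    fun x hx => ?_
  calc svalue B k / c * ‖x‖ ≤ svalue B k / c * (c * ‖toEuclideanLin M x‖) := by gcongr; exact hM x
    _ = svalue B k * ‖toEuclideanLin M x‖ := by field_simp
    _ ≤ ‖toEuclideanLin B (toEuclideanLin M x)‖ := hB _ hx
    _ = ‖toEuclideanLin (B * M) x‖ := by rw [toLpLin_mul_same]; rfl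

end SingularValues

section Orthonormalization

variable {m n : ℕ}

theorem mulVec_injective_of_rank_eq (Z : Matrix (Fin m) (Fin n) ℝ) (hZ : Z.rank = n) :
    Function.Injective Z.mulVec := by
  have h := LinearMap.finrank_range_add_finrank_ker Z.mulVecLin
  rw [← Matrix.rank, hZ, Module.finrank_fin_fun] at h
  have hker : Module.finrank ℝ (LinearMap.ker Z.mulVecLin) = 0 := by omega
  exact LinearMap.ker_eq_bot.mp (Submodule.finrank_eq_zero.mp hker)

theorem sqrtInv_eq_inv_cfc_sqrt {S : Matrix (Fin n) (Fin n) ℝ} (hS : S.PosSemidef) :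
    sqrtInv S = (cfc Real.sqrt S)⁻¹ := by
  rw [sqrtInv, dif_pos hS, hS.1.cfc_eq, IsHermitian.cfc, Unitary.conjStarAlgAut_apply]
  rfl

theorem transpose_sqrtInv_mul_mul_sqrtInv {S : Matrix (Fin n) (Fin n) ℝ} (hS : S.PosDef) :
    (sqrtInv S)ᵀ * S * sqrtInv S = 1 := by
  rw [sqrtInv_eq_inv_cfc_sqrt hS.posSemidef]
  set Q := cfc Real.sqrt S
  have hQQ : Q * Q = S := by
    have hspec := (posSemidef_iff_isHermitian_and_spectrum_nonneg.mp hS.posSemidef).2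
    rw [← cfc_mul Real.sqrt Real.sqrt S]
    exact (cfc_congr fun x hx => Real.mul_self_sqrt (hspec hx)).trans (cfc_id ℝ S hS.isHermitian)
  have hQ : Qᵀ = Q := by
    rw [← conjTranspose_eq_transpose_of_trivial]
    exact (cfc_predicate Real.sqrt S : IsSelfAdjoint Q)
  have hdet : IsUnit Q.det := by
    refine isUnit_of_mul_isUnit_left (y := Q.det) ?_
    rw [← det_mul, hQQ]
    exact hS.det_pos.ne'.isUnit
  clear_value Q
  subst hQQ
  rw [transpose_nonsing_inv, hQ, Matrix.mul_assoc, Matrix.mul_assoc, mul_nonsing_inv Q hdet,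
    Matrix.mul_one, nonsing_inv_mul Q hdet]

theorem stiefel_mul_sqrtInv {Z : Matrix (Fin m) (Fin n) ℝ} (hZ : (Zᵀ * Z).PosDef) :
    Stiefel (Z * sqrtInv (Zᵀ * Z)) := by
  rw [Stiefel, transpose_mul, Matrix.mul_assoc, ← Matrix.mul_assoc Zᵀ, ← Matrix.mul_assoc]
  exact transpose_sqrtInv_mul_mul_sqrtInv hZ

theorem Stiefel.norm_toEuclideanLin {X : Matrix (Fin m) (Fin n) ℝ} (hX : Stiefel X)
    (x : EuclideanSpace ℝ (Fin n)) : ‖toEuclideanLin X x‖ = ‖x‖ := by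
  refine (sq_eq_sq₀ (norm_nonneg _) (norm_nonneg _)).mp ?_
  rw [← inner_toEuclideanLin_transpose_mul_self, hX, toLpLin_one, LinearMap.id_apply,
    real_inner_self_eq_norm_sq]

end Orthonormalization

noncomputable section

theorem stmt1_general {m r r_A : ℕ} (U : Matrix (Fin m) (Fin r_A) ℝ)
    (Z : Matrix (Fin m) (Fin r) ℝ) (hZ : Z.rank = r) :
    Stiefel (Z * sqrtInv (Zᵀ * Z)) ∧
      svalue (Uᵀ * Z) r_A / svalue Z 1 ≤ svalue (Uᵀ * (Z * sqrtInv (Zᵀ * Z))) r_A := by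
  have hX : Stiefel (Z * sqrtInv (Zᵀ * Z)) := by
    refine stiefel_mul_sqrtInv ?_
    simpa using PosDef.conjTranspose_mul_self Z (mulVec_injective_of_rank_eq Z hZ)
  refine ⟨hX, div_le_of_le_mul₀ (svalue_nonneg _ _) (svalue_nonneg _ _) ?_⟩
  rw [← Matrix.mul_assoc, mul_comm]
  refine svalue_le_mul_svalue_mul _ _ (fun x => ?_) r_A
  calc ‖x‖ = ‖toEuclideanLin Z (toEuclideanLin (sqrtInv (Zᵀ * Z)) x)‖ := by
        rw [← hX.norm_toEuclideanLin x, toLpLin_mul_same]; rfl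
    _ ≤ svalue Z 1 * ‖toEuclideanLin (sqrtInv (Zᵀ * Z)) x‖ :=
        norm_toEuclideanLin_le_svalue_one_mul Z _

theorem stmt1 {m r r_A : ℕ} (h1 : 1 ≤ r_A) (h2 : r_A ≤ r) (h3 : r ≤ m)
    (U : Matrix (Fin m) (Fin r_A) ℝ) (hU : Stiefel U)
    (Z : Matrix (Fin m) (Fin r) ℝ) (hZ : Z.rank = r) :
    Stiefel (Z * sqrtInv (Zᵀ * Z)) ∧
      svalue (Uᵀ * Z) r_A / svalue Z 1 ≤ svalue (Uᵀ * (Z * sqrtInv (Zᵀ * Z))) r_A :=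
  stmt1_general U Z hZ

end
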